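/- arXiv:1110.0099 — 10 statements merged into one kernel-verified Lean document; each statement's English description precedes it below -/
import Mathlib

section
/- Let F₁, ..., F_m be intersecting families of subsets of an n-element set (each family F_i satisfies: any two members of F_i have nonempty intersection). Then |F₁ ∪ ... ∪ F_m| ≤ 2^n − 2^{n−m}. -/
theorem stmt_1 (n m : ℕ) (F : Fin m → Finset (Finset (Fin n)))
    (hint : ∀ i, ∀ A ∈ F i, ∀ B ∈ F i, (A ∩ B).Nonempty) :
    (Finset.univ.biUnion F).card ≤ 2 ^ n - 2 ^ (n - m) := by
  rcases Nat.eq_zero_or_pos n with rfl | hn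
  · have h : Finset.univ.biUnion F = ∅ := by
      simp only [Finset.eq_empty_iff_forall_notMem, Finset.mem_biUnion]
      rintro A ⟨i, -, hA⟩
      have := hint i A hA A hA
      simp [Finset.eq_empty_of_isEmpty A] at this
    simp [h]
  · haveI : Nonempty (Fin n) := ⟨⟨0, hn⟩⟩
    have := Finset.card_biUnion_le_of_intersecting (Finset.univ : Finset (Fin m)) F
      (fun i _ => fun A hA B hB => by
        rcases hint i A hA B hB with ⟨x, hx⟩
        exact fun h => absurd h (by simp [Finset.disjoint_left.not]; exact ⟨x, (Finset.mem_inter.mp hx).1, (Finset.mem_inter.mp hx).2⟩))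
    simpa using this
end

section
/- Let X be a finite set partitioned into nonempty parts X₁ and X₂, and let F ⊆ 2^X be a 2-part intersecting family, i.e., for every A ⊆ X₁ the trace family F_A = {F ∩ X₂ : F ∈ F, F ∩ X₁ = A} is intersecting, and for every B ⊆ X₂ the trace family F_B = {F ∩ X₁ : F ∈ F, F ∩ X₂ = B} is intersecting. Then |F| ≤ (3/8)·2^{|X|}. -/
open Finset

/-- Kleitman: union of two intersecting families of subsets of a fintype has
size at most (3/4)·2^n. -/
lemma kleitman_two_fintype {β : Type*} [Fintype β] [DecidableEq β]
    (G H : Finset (Finset β))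
    (hG : (↑G : Set (Finset β)).Intersecting)
    (hH : (↑H : Set (Finset β)).Intersecting) :
    4 * (G ∪ H).card ≤ 3 * 2 ^ Fintype.card β := by
  rcases isEmpty_or_nonempty β with hβ | hβ
  · have hGe : G = ∅ := by
      rcases Finset.eq_empty_or_nonempty G with h | ⟨s, hs⟩
      · exact h
      · exact absurd (hG hs hs) (by simp [Subsingleton.elim s ∅])
    have hHe : H = ∅ := by
      rcases Finset.eq_empty_or_nonempty H with h | ⟨s, hs⟩
      · exact h
      · exact absurd (hH hs hs) (by simp [Subsingleton.elim s ∅])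
    simp [hGe, hHe]
  · obtain ⟨b⟩ := hβ
    haveI : Nontrivial (Finset β) := ⟨∅, {b}, (Finset.singleton_ne_empty b).symm⟩
    obtain ⟨G', hGG', hcG, hG'⟩ := hG.exists_card_eq
    obtain ⟨H', hHH', hcH, hH'⟩ := hH.exists_card_eq
    have hupG : IsUpperSet (↑G' : Set (Finset β)) :=
      hG'.isUpperSet' (hG'.is_max_iff_card_eq.2 hcG)
    have hupH : IsUpperSet (↑H' : Set (Finset β)) :=
      hH'.isUpperSet' (hH'.is_max_iff_card_eq.2 hcH)
    have hk := hupG.le_card_inter_finset hupH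
    rw [Fintype.card_finset] at hcG hcH
    have hsub : (G ∪ H).card ≤ (G' ∪ H').card :=
      card_le_card (union_subset_union hGG' hHH')
    have hcui : (G' ∪ H').card + (G' ∩ H').card = G'.card + H'.card :=
      card_union_add_card_inter _ _
    -- from Harris-Kleitman: 2^n ≤ 4 * (G' ∩ H').card
    have h4 : 2 ^ Fintype.card β * 2 ^ Fintype.card β
        ≤ 2 ^ Fintype.card β * (4 * (G' ∩ H').card) := by
      calc 2 ^ Fintype.card β * 2 ^ Fintype.card β
          = (2 * G'.card) * (2 * H'.card) := by rw [hcG, hcH]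
        _ = 4 * (G'.card * H'.card) := by ring
        _ ≤ 4 * (2 ^ Fintype.card β * (G' ∩ H').card) :=
            Nat.mul_le_mul_left _ hk
        _ = 2 ^ Fintype.card β * (4 * (G' ∩ H').card) := by ring
    have h5 : 2 ^ Fintype.card β ≤ 4 * (G' ∩ H').card :=
      Nat.le_of_mul_le_mul_left h4 (Nat.pos_of_ne_zero (by positivity))
    omega

/-- Kleitman for families of subsets of a finset `Y`. -/
lemma kleitman_two {α : Type*} [DecidableEq α] (Y : Finset α)
    (G H : Finset (Finset α))
    (hGY : ∀ s ∈ G, s ⊆ Y) (hHY : ∀ s ∈ H, s ⊆ Y)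
    (hG : ∀ s ∈ G, ∀ t ∈ G, (s ∩ t).Nonempty)
    (hH : ∀ s ∈ H, ∀ t ∈ H, (s ∩ t).Nonempty) :
    4 * (G ∪ H).card ≤ 3 * 2 ^ Y.card := by
  classical
  set e : Finset α → Finset {x // x ∈ Y} := fun s => s.subtype (· ∈ Y) with he
  have hinj : ∀ s, s ⊆ Y → ∀ t, t ⊆ Y → e s = e t → s = t := by
    intro s hs t ht hst
    have : (e s).map (Function.Embedding.subtype _)
        = (e t).map (Function.Embedding.subtype _) := by rw [hst]
    rwa [he, Finset.subtype_map, Finset.subtype_map,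
      Finset.filter_true_of_mem (fun x hx => hs hx),
      Finset.filter_true_of_mem (fun x hx => ht hx)] at this
  have hint : ∀ (K : Finset (Finset α)), (∀ s ∈ K, s ⊆ Y) →
      (∀ s ∈ K, ∀ t ∈ K, (s ∩ t).Nonempty) →
      (↑(K.image e) : Set (Finset {x // x ∈ Y})).Intersecting := by
    intro K hKY hK a ha b hb
    simp only [Finset.coe_image, Set.mem_image, Finset.mem_coe] at ha hb
    obtain ⟨s, hs, rfl⟩ := ha
    obtain ⟨t, ht, rfl⟩ := hb
    obtain ⟨x, hx⟩ := hK s hs t ht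
    rw [Finset.not_disjoint_iff]
    have hxY : x ∈ Y := hKY s hs (Finset.mem_inter.1 hx).1
    refine ⟨⟨x, hxY⟩, ?_, ?_⟩ <;> simp [he, Finset.mem_subtype]
    · exact (Finset.mem_inter.1 hx).1
    · exact (Finset.mem_inter.1 hx).2
  have hcard : ((G.image e) ∪ (H.image e)).card = (G ∪ H).card := by
    rw [← Finset.image_union]
    apply Finset.card_image_of_injOn
    intro s hs t ht hst
    have hs' : s ⊆ Y := by
      rcases Finset.mem_union.1 hs with h | h
      exacts [hGY s h, hHY s h]
    have ht' : t ⊆ Y := by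
      rcases Finset.mem_union.1 ht with h | h
      exacts [hGY t h, hHY t h]
    exact hinj s hs' t ht' hst
  have := kleitman_two_fintype (G.image e) (H.image e)
    (hint G hGY hG) (hint H hHY hH)
  rwa [hcard, Fintype.card_coe] at this

theorem stmt_2 {α : Type*} [DecidableEq α] (X₁ X₂ : Finset α)
    (hdisj : Disjoint X₁ X₂) (h1 : X₁.Nonempty) (h2 : X₂.Nonempty)
    (F : Finset (Finset α)) (hF : F ⊆ (X₁ ∪ X₂).powerset)
    (htr1 : ∀ A ⊆ X₁, ∀ S₁ ∈ (F.filter (fun S => S ∩ X₁ = A)).image (fun S => S ∩ X₂),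
      ∀ S₂ ∈ (F.filter (fun S => S ∩ X₁ = A)).image (fun S => S ∩ X₂), (S₁ ∩ S₂).Nonempty)
    (htr2 : ∀ B ⊆ X₂, ∀ S₁ ∈ (F.filter (fun S => S ∩ X₂ = B)).image (fun S => S ∩ X₁),
      ∀ S₂ ∈ (F.filter (fun S => S ∩ X₂ = B)).image (fun S => S ∩ X₁), (S₁ ∩ S₂).Nonempty) :
    8 * F.card ≤ 3 * 2 ^ (X₁ ∪ X₂).card := by
  classical
  set g : Finset α → ℕ := fun A => (F.filter fun S => S ∩ X₁ = A).card with hg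
  set T : Finset α → Finset (Finset α) :=
    fun A => (F.filter fun S => S ∩ X₁ = A).image (fun S => S ∩ X₂) with hT
  have hkey : ∀ S ∈ F, S = (S ∩ X₁) ∪ (S ∩ X₂) := by
    intro S hS
    have h : S ⊆ X₁ ∪ X₂ := Finset.mem_powerset.1 (hF hS)
    rw [← Finset.inter_union_distrib_left, Finset.inter_eq_left.2 h]
  -- g A = card of the trace
  have hgT : ∀ A, g A = (T A).card := by
    intro A
    rw [hg, hT]
    symm
    apply Finset.card_image_of_injOn
    intro s hs t ht hst
    simp only [Finset.mem_coe, Finset.mem_filter] at hs ht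
    have hst' : s ∩ X₂ = t ∩ X₂ := hst
    rw [hkey s hs.1, hkey t ht.1, hs.2, ht.2, hst']
  -- traces over A and X₁ \ A are disjoint
  have hTdisj : ∀ A ⊆ X₁, Disjoint (T A) (T (X₁ \ A)) := by
    intro A hA
    rw [Finset.disjoint_left]
    intro B hB hB'
    simp only [hT, Finset.mem_image, Finset.mem_filter] at hB hB'
    obtain ⟨s, ⟨hsF, hsA⟩, hsB⟩ := hB
    obtain ⟨t, ⟨htF, htA⟩, htB⟩ := hB'
    have hBX₂ : B ⊆ X₂ := by rw [← hsB]; exact Finset.inter_subset_right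
    have h1' : A ∈ (F.filter (fun S => S ∩ X₂ = B)).image (fun S => S ∩ X₁) :=
      Finset.mem_image.2 ⟨s, Finset.mem_filter.2 ⟨hsF, hsB⟩, hsA⟩
    have h2' : X₁ \ A ∈ (F.filter (fun S => S ∩ X₂ = B)).image (fun S => S ∩ X₁) :=
      Finset.mem_image.2 ⟨t, Finset.mem_filter.2 ⟨htF, htB⟩, htA⟩
    have := htr2 B hBX₂ A h1' (X₁ \ A) h2'
    simp [Finset.inter_sdiff_self] at this
  -- per-pair bound
  have hpair : ∀ A ∈ X₁.powerset, 4 * (g A + g (X₁ \ A)) ≤ 3 * 2 ^ X₂.card := by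
    intro A hA
    rw [Finset.mem_powerset] at hA
    have hsubY : ∀ (A' : Finset α), ∀ s ∈ T A', s ⊆ X₂ := by
      intro A' s hs
      simp only [hT, Finset.mem_image] at hs
      obtain ⟨t, _, rfl⟩ := hs
      exact Finset.inter_subset_right
    have hcu : (T A ∪ T (X₁ \ A)).card = g A + g (X₁ \ A) := by
      rw [Finset.card_union_of_disjoint (hTdisj A hA), hgT, hgT]
    calc 4 * (g A + g (X₁ \ A)) = 4 * (T A ∪ T (X₁ \ A)).card := by rw [hcu]
      _ ≤ 3 * 2 ^ X₂.card :=
        kleitman_two X₂ (T A) (T (X₁ \ A)) (hsubY A) (hsubY (X₁ \ A))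
          (htr1 A hA) (htr1 (X₁ \ A) (Finset.sdiff_subset))
  -- fiberwise count
  have hFcard : F.card = ∑ A ∈ X₁.powerset, g A :=
    Finset.card_eq_sum_card_fiberwise
      (fun S _ => Finset.mem_powerset.2 Finset.inter_subset_right)
  have hflip : ∑ A ∈ X₁.powerset, g (X₁ \ A) = ∑ A ∈ X₁.powerset, g A := by
    apply Finset.sum_nbij' (i := fun A => X₁ \ A) (j := fun A => X₁ \ A)
    · intro A hA
      exact Finset.mem_powerset.2 Finset.sdiff_subset
    · intro A hA
      exact Finset.mem_powerset.2 Finset.sdiff_subset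
    · intro A hA
      exact Finset.sdiff_sdiff_eq_self (Finset.mem_powerset.1 hA)
    · intro A hA
      exact Finset.sdiff_sdiff_eq_self (Finset.mem_powerset.1 hA)
    · intro A hA
      rfl
  have hsum : 8 * F.card = ∑ A ∈ X₁.powerset, 4 * (g A + g (X₁ \ A)) := by
    have : ∑ A ∈ X₁.powerset, 4 * (g A + g (X₁ \ A))
        = 4 * ((∑ A ∈ X₁.powerset, g A) + ∑ A ∈ X₁.powerset, g (X₁ \ A)) := by
      rw [← Finset.sum_add_distrib, ← Finset.mul_sum]
    rw [this, hflip, ← hFcard]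
    ring
  have hbound : ∑ A ∈ X₁.powerset, 4 * (g A + g (X₁ \ A))
      ≤ ∑ _A ∈ X₁.powerset, 3 * 2 ^ X₂.card :=
    Finset.sum_le_sum hpair
  rw [hsum]
  calc ∑ A ∈ X₁.powerset, 4 * (g A + g (X₁ \ A))
      ≤ ∑ _A ∈ X₁.powerset, 3 * 2 ^ X₂.card := hbound
    _ = 2 ^ X₁.card * (3 * 2 ^ X₂.card) := by
        rw [Finset.sum_const, Finset.card_powerset, smul_eq_mul]
    _ = 3 * 2 ^ (X₁ ∪ X₂).card := by
        rw [Finset.card_union_of_disjoint hdisj, pow_add]; ring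
end

section
/- Let D be a downward closed family of subsets of a finite set (if D ∈ D and D' ⊆ D then D' ∈ D), and let F ⊆ D be an intersecting subfamily (any two members of F have nonempty intersection). Then 2|F| ≤ |D|. -/
open FinsetFamily
theorem stmt_9 {α : Type*} [DecidableEq α] (D : Finset (Finset α))
    (hdown : ∀ S ∈ D, ∀ S' ⊆ S, S' ∈ D)
    (F : Finset (Finset α)) (hFD : F ⊆ D)
    (hint : ∀ S₁ ∈ F, ∀ S₂ ∈ F, (S₁ ∩ S₂).Nonempty) :
    2 * F.card ≤ D.card := by
  have hΔD : F \\ F ⊆ D := by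
    intro x hx
    rw [Finset.mem_diffs] at hx
    obtain ⟨a, ha, b, hb, rfl⟩ := hx
    exact hdown a (hFD ha) _ (Finset.sdiff_subset)
  have hdisj : Disjoint F (F \\ F) := by
    rw [Finset.disjoint_left]
    intro s hs hsΔ
    rw [Finset.mem_diffs] at hsΔ
    obtain ⟨a, ha, b, hb, rfl⟩ := hsΔ
    have := hint _ hs _ hb
    simp [Finset.sdiff_inter_self] at this
  have h1 : F.card ≤ (F \\ F).card := Finset.card_le_card_diffs F
  have h2 : F.card + (F \\ F).card ≤ D.card := by
    rw [← Finset.card_union_of_disjoint hdisj]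
    exact Finset.card_le_card (Finset.union_subset hFD hΔD)
  omega
end

section
/- Let F, G ⊆ 2^{[n]} be families such that both F and G are intersecting, and they are cross-Sperner: there is no F ∈ F and G ∈ G with F ⊆ G or G ⊆ F. Then |F| + |G| ≤ 2^{n−1}. -/
/-!
For a family `𝒜`, the differences `a \ b` with `a, b ∈ 𝒜` are at least as many as the members
of `𝒜` (Marica–Schönheim). When `𝒜` and `ℬ` are intersecting and cross-Sperner, the family
`(𝒜 \\ 𝒜) ∪ ℬ` is a disjoint union containing no set together with its complement, so it has at
most half of the `2 ^ n` sets.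
-/

open Finset
open scoped FinsetFamily

variable {α : Type*} [BooleanAlgebra α] [DecidableEq α] {𝒜 ℬ : Finset α} {s : α}

namespace Finset

lemma two_mul_card_le_of_compl_notMem [Fintype α] (h𝒜 : ∀ a ∈ 𝒜, aᶜ ∉ 𝒜) :
    2 * #𝒜 ≤ Fintype.card α := by
  have hdisj : Disjoint 𝒜 𝒜ᶜˢ := disjoint_left.2 fun a ha ha' => h𝒜 a ha (mem_compls.1 ha')
  calc 2 * #𝒜 = #(𝒜 ∪ 𝒜ᶜˢ) := by rw [card_union_of_disjoint hdisj, card_compls, two_mul]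
    _ ≤ Fintype.card α := card_le_univ _

lemma disjoint_diffs_of_forall_not_le (h : ∀ a ∈ 𝒜, ∀ b ∈ ℬ, ¬ b ≤ a) :
    Disjoint (𝒜 \\ 𝒜) ℬ := by
  refine disjoint_left.2 fun s hs hsℬ => ?_
  obtain ⟨a, ha, b, -, rfl⟩ := mem_diffs.1 hs
  exact h a ha _ hsℬ sdiff_le

lemma compl_notMem_of_mem_diffs (h : ∀ a ∈ 𝒜, ∀ b ∈ ℬ, ¬ a ≤ b) (hs : s ∈ 𝒜 \\ 𝒜) :
    sᶜ ∉ ℬ := by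
  obtain ⟨a, -, b, hb, rfl⟩ := mem_diffs.1 hs
  exact fun hℬ => h b hb _ hℬ (le_compl_iff_disjoint_right.2 disjoint_sdiff_self_right)

end Finset

namespace Set.Intersecting

lemma compl_notMem_diffs (h𝒜 : (𝒜 : Set α).Intersecting) (hs : s ∈ 𝒜 \\ 𝒜) :
    sᶜ ∉ 𝒜 \\ 𝒜 := by
  intro hsc
  obtain ⟨a, -, b, hb, rfl⟩ := mem_diffs.1 hs
  obtain ⟨c, -, d, hd, hcd⟩ := mem_diffs.1 hsc
  -- `d` misses `c \ d = (a \ b)ᶜ`, so `d ≤ a \ b`, which misses `b`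
  have hda : d ≤ a \ b := disjoint_compl_right_iff.1 (hcd ▸ disjoint_sdiff_self_right)
  exact h𝒜 hd hb (disjoint_sdiff_self_left.mono_left hda)

theorem two_mul_card_add_card_le [Fintype α] (h𝒜 : (𝒜 : Set α).Intersecting)
    (hℬ : (ℬ : Set α).Intersecting) (hcross : ∀ a ∈ 𝒜, ∀ b ∈ ℬ, ¬ a ≤ b ∧ ¬ b ≤ a) :
    2 * (#𝒜 + #ℬ) ≤ Fintype.card α := by
  have hdisj := disjoint_diffs_of_forall_not_le fun a ha b hb => (hcross a ha b hb).2
  have hcompl : ∀ s ∈ 𝒜 \\ 𝒜 ∪ ℬ, sᶜ ∉ 𝒜 \\ 𝒜 ∪ ℬ := by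
    intro s hs
    have hdiffs_compl : ∀ t ∈ 𝒜 \\ 𝒜, tᶜ ∉ ℬ := fun _ =>
      compl_notMem_of_mem_diffs fun a ha b hb => (hcross a ha b hb).1
    rw [Finset.mem_union] at hs ⊢
    rcases hs with hs | hs
    · exact not_or.2 ⟨h𝒜.compl_notMem_diffs hs, hdiffs_compl s hs⟩
    · exact not_or.2 ⟨fun hsc => hdiffs_compl _ hsc (by rwa [compl_compl]), hℬ.compl_notMem hs⟩
  calc 2 * (#𝒜 + #ℬ) ≤ 2 * #(𝒜 \\ 𝒜 ∪ ℬ) := by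
        rw [card_union_of_disjoint hdisj]
        gcongr 2 * (?_ + _)
        exact card_le_card_diffs 𝒜
    _ ≤ Fintype.card α := two_mul_card_le_of_compl_notMem hcompl

end Set.Intersecting

theorem stmt_10 (n : ℕ) (F G : Finset (Finset (Fin n)))
    (hFint : ∀ A ∈ F, ∀ B ∈ F, (A ∩ B).Nonempty)
    (hGint : ∀ A ∈ G, ∀ B ∈ G, (A ∩ B).Nonempty)
    (hcross : ∀ A ∈ F, ∀ B ∈ G, ¬ A ⊆ B ∧ ¬ B ⊆ A) :
    F.card + G.card ≤ 2 ^ (n - 1) := by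
  have hF : (F : Set (Finset (Fin n))).Intersecting := fun a ha b hb =>
    not_disjoint_iff_nonempty_inter.2 (hFint a ha b hb)
  have hG : (G : Set (Finset (Fin n))).Intersecting := fun a ha b hb =>
    not_disjoint_iff_nonempty_inter.2 (hGint a ha b hb)
  have h := hF.two_mul_card_add_card_le hG hcross
  rw [Fintype.card_finset, Fintype.card_fin] at h
  cases n with
  | zero => simp only [pow_zero, zero_tsub] at h ⊢; omega
  | succ m => rw [pow_succ] at h; simp only [Nat.add_sub_cancel]; omega
end

section
/- For n ≥ 2, the pair of families F = {F ⊆ [n] : 1 ∈ F, 2 ∉ F} and G = {G ⊆ [n] : 1 ∉ G, 2 ∈ G} satisfies: F and G are both intersecting, they are cross-Sperner (no member of one contains or is contained in a member of the other), and |F| + |G| = 2^{n−1}. -/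
lemma aux_card {n : ℕ} (a b : Fin n) (hab : a ≠ b) :
    (Finset.univ.filter (fun S : Finset (Fin n) => a ∈ S ∧ b ∉ S)).card = 2 ^ (n - 2) := by
  have hsub : ((Finset.univ.erase b).erase a).card = n - 2 := by
    rw [Finset.card_erase_of_mem (by simp [hab]), Finset.card_erase_of_mem (by simp),
      Finset.card_univ, Fintype.card_fin]
    omega
  rw [← hsub, ← Finset.card_powerset]
  apply Finset.card_bij (fun S _ => S.erase a)
  · intro S hS
    simp only [Finset.mem_filter, Finset.mem_univ, true_and] at hS
    simp only [Finset.mem_powerset]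
    intro x hx
    simp only [Finset.mem_erase] at hx ⊢
    exact ⟨hx.1, fun hxb => hS.2 (hxb ▸ hx.2), Finset.mem_univ x⟩
  · intro S hS T hT h
    simp only [Finset.mem_filter, Finset.mem_univ, true_and] at hS hT
    rw [← Finset.insert_erase hS.1, ← Finset.insert_erase hT.1, h]
  · intro T hT
    simp only [Finset.mem_powerset] at hT
    have haT : a ∉ T := fun h => by simpa using hT h
    have hbT : b ∉ T := fun h => by simpa [hab.symm] using (hT h)
    refine ⟨insert a T, ?_, ?_⟩
    · simp only [Finset.mem_filter, Finset.mem_univ, true_and]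
      exact ⟨Finset.mem_insert_self a T, by simp [hab.symm, hbT]⟩
    · rw [Finset.erase_insert haT]

theorem stmt_11 (n : ℕ) (hn : 2 ≤ n)
    (F G : Finset (Finset (Fin n)))
    (hF : F = Finset.univ.filter
      (fun S : Finset (Fin n) => (⟨0, by omega⟩ : Fin n) ∈ S ∧ (⟨1, by omega⟩ : Fin n) ∉ S))
    (hG : G = Finset.univ.filter
      (fun S : Finset (Fin n) => (⟨0, by omega⟩ : Fin n) ∉ S ∧ (⟨1, by omega⟩ : Fin n) ∈ S)) :
    (∀ A ∈ F, ∀ B ∈ F, (A ∩ B).Nonempty) ∧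
    (∀ A ∈ G, ∀ B ∈ G, (A ∩ B).Nonempty) ∧
    (∀ A ∈ F, ∀ B ∈ G, ¬ A ⊆ B ∧ ¬ B ⊆ A) ∧
    F.card + G.card = 2 ^ (n - 1) := by
  set a : Fin n := ⟨0, by omega⟩
  set b : Fin n := ⟨1, by omega⟩
  have hab : a ≠ b := by simp [a, b, Fin.ext_iff]
  subst hF hG
  refine ⟨?_, ?_, ?_, ?_⟩
  · intro A hA B hB
    simp only [Finset.mem_filter] at hA hB
    exact ⟨a, Finset.mem_inter.2 ⟨hA.2.1, hB.2.1⟩⟩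
  · intro A hA B hB
    simp only [Finset.mem_filter] at hA hB
    exact ⟨b, Finset.mem_inter.2 ⟨hA.2.2, hB.2.2⟩⟩
  · intro A hA B hB
    simp only [Finset.mem_filter] at hA hB
    exact ⟨fun h => hB.2.1 (h hA.2.1), fun h => hA.2.2 (h hB.2.2)⟩
  · have hcomm : (Finset.univ.filter (fun S : Finset (Fin n) => a ∉ S ∧ b ∈ S))
        = (Finset.univ.filter (fun S : Finset (Fin n) => b ∈ S ∧ a ∉ S)) := by
      apply Finset.filter_congr; intro S _; exact and_comm
    rw [hcomm, aux_card a b hab, aux_card b a hab.symm]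
    have : n - 1 = (n - 2) + 1 := by omega
    rw [this, pow_succ]
    ring
end

section
/- Let n ≥ 2 and k ≥ n/2. The families F_k = {F ⊆ [n] : 1 ∈ F, |F| ≤ k} and G_k = {G ⊆ [n] : 1 ∉ G, |G| ≥ k} are both intersecting, are cross-Sperner, and satisfy |F_k| + |G_k| = 2^{n−1}. -/
theorem stmt_12 (n k : ℕ) (hn : 2 ≤ n) (hk : n ≤ 2 * k)
    (F G : Finset (Finset (Fin n)))
    (hF : F = Finset.univ.filter
      (fun S : Finset (Fin n) => (⟨0, by omega⟩ : Fin n) ∈ S ∧ S.card ≤ k))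
    (hG : G = Finset.univ.filter
      (fun S : Finset (Fin n) => (⟨0, by omega⟩ : Fin n) ∉ S ∧ k ≤ S.card)) :
    (∀ A ∈ F, ∀ B ∈ F, (A ∩ B).Nonempty) ∧
    (∀ A ∈ G, ∀ B ∈ G, (A ∩ B).Nonempty) ∧
    (∀ A ∈ F, ∀ B ∈ G, ¬ A ⊆ B ∧ ¬ B ⊆ A) ∧
    F.card + G.card = 2 ^ (n - 1) := by
  have hn0 : 0 < n := by omega
  set z : Fin n := ⟨0, by omega⟩ with hz
  subst hF hG
  have hmemF : ∀ A, A ∈ Finset.univ.filter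
      (fun S : Finset (Fin n) => z ∈ S ∧ S.card ≤ k) ↔ z ∈ A ∧ A.card ≤ k := by
    intro A; simp [Finset.mem_filter]
  have hmemG : ∀ A, A ∈ Finset.univ.filter
      (fun S : Finset (Fin n) => z ∉ S ∧ k ≤ S.card) ↔ z ∉ A ∧ k ≤ A.card := by
    intro A; simp [Finset.mem_filter]
  refine ⟨?_, ?_, ?_, ?_⟩
  · intro A hA B hB
    rw [hmemF] at hA hB
    exact ⟨z, Finset.mem_inter.mpr ⟨hA.1, hB.1⟩⟩
  · intro A hA B hB
    rw [hmemG] at hA hB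
    by_contra h
    rw [Finset.not_nonempty_iff_eq_empty] at h
    have hd : Disjoint A B := Finset.disjoint_iff_inter_eq_empty.mpr h
    have hsub : A ∪ B ⊆ Finset.univ.erase z := by
      intro x hx
      rcases Finset.mem_union.mp hx with hxa | hxb
      · exact Finset.mem_erase.mpr ⟨fun e => hA.1 (e ▸ hxa), Finset.mem_univ x⟩
      · exact Finset.mem_erase.mpr ⟨fun e => hB.1 (e ▸ hxb), Finset.mem_univ x⟩
    have h1 : (A ∪ B).card ≤ n - 1 := by
      have := Finset.card_le_card hsub
      simpa [Finset.card_erase_of_mem, Finset.card_univ] using this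
    rw [Finset.card_union_of_disjoint hd] at h1
    omega
  · intro A hA B hB
    rw [hmemF] at hA; rw [hmemG] at hB
    constructor
    · intro hsub; exact hB.1 (hsub hA.1)
    · intro hsub
      have h1 : B.card ≤ A.card := Finset.card_le_card hsub
      have h2 : A.card = B.card := by omega
      have : A = B := (Finset.eq_of_subset_of_card_le hsub h2.le).symm
      exact hB.1 (this ▸ hA.1)
  · have hd : Disjoint (Finset.univ.filter
        (fun S : Finset (Fin n) => z ∈ S ∧ S.card ≤ k))
        (Finset.univ.filter (fun S : Finset (Fin n) => z ∉ S ∧ k ≤ S.card)) := by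
      rw [Finset.disjoint_left]
      intro A hA hA'
      exact ((hmemG A).mp hA').1 ((hmemF A).mp hA).1
    rw [← Finset.card_union_of_disjoint hd]
    have hcard : ((Finset.univ.erase z).powerset).card = 2 ^ (n - 1) := by
      rw [Finset.card_powerset, Finset.card_erase_of_mem (Finset.mem_univ z),
        Finset.card_univ, Fintype.card_fin]
    rw [← hcard]
    apply Finset.card_bij (fun A _ => A.erase z)
    · intro A hA
      rw [Finset.mem_powerset]
      intro x hx
      exact Finset.mem_erase.mpr ⟨(Finset.mem_erase.mp hx).1, Finset.mem_univ x⟩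
    · intro A hA B hB hAB
      rcases Finset.mem_union.mp hA with h | h <;>
        rcases Finset.mem_union.mp hB with h' | h'
      · have hzA := ((hmemF A).mp h).1
        have hzB := ((hmemF B).mp h').1
        rw [← Finset.insert_erase hzA, ← Finset.insert_erase hzB, hAB]
      · exfalso
        have hzA := ((hmemF A).mp h).1
        have hzB := ((hmemG B).mp h').1
        have : B.card ≤ A.card - 1 := by
          rw [← Finset.card_erase_of_mem hzA, hAB, Finset.erase_eq_of_notMem hzB]
        have hAk := ((hmemF A).mp h).2
        have hBk := ((hmemG B).mp h').2
        have hApos : 0 < A.card := Finset.card_pos.mpr ⟨z, hzA⟩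
        omega
      · exfalso
        have hzA := ((hmemG A).mp h).1
        have hzB := ((hmemF B).mp h').1
        have : A.card ≤ B.card - 1 := by
          rw [← Finset.card_erase_of_mem hzB, ← hAB, Finset.erase_eq_of_notMem hzA]
        have hAk := ((hmemG A).mp h).2
        have hBk := ((hmemF B).mp h').2
        have hBpos : 0 < B.card := Finset.card_pos.mpr ⟨z, hzB⟩
        omega
      · have hzA := ((hmemG A).mp h).1
        have hzB := ((hmemG B).mp h').1
        rwa [Finset.erase_eq_of_notMem hzA, Finset.erase_eq_of_notMem hzB] at hAB
    · intro T hT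
      rw [Finset.mem_powerset] at hT
      have hzT : z ∉ T := fun h => (Finset.mem_erase.mp (hT h)).1 rfl
      by_cases hTk : k ≤ T.card
      · refine ⟨T, Finset.mem_union_right _ ((hmemG T).mpr ⟨hzT, hTk⟩), ?_⟩
        rw [Finset.erase_eq_of_notMem hzT]
      · refine ⟨insert z T, Finset.mem_union_left _ ((hmemF _).mpr
          ⟨Finset.mem_insert_self z T, ?_⟩), ?_⟩
        · rw [Finset.card_insert_of_notMem hzT]; omega
        · rw [Finset.erase_insert hzT]
end

section
/- Let X be a finite set partitioned into X₁ and X₂, and let F ⊆ 2^X be a 1-part intersecting, 1-part Sperner family: there is no pair of distinct sets F₁, F₂ ∈ F such that the traces on one part are disjoint (F₁ ∩ X_i) ∩ (F₂ ∩ X_i) = ∅ and the traces on the other part are in containment (F₁ ∩ X_j ⊆ F₂ ∩ X_j or F₂ ∩ X_j ⊆ F₁ ∩ X_j, {i,j} = {1,2}). Then |F| ≤ 2^{|X|−2}. -/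
/-!
Split `F` by the trace `S ∩ X₁`. For `A ⊆ X₁`, the `X₂`-traces of the members with `X₁`-trace `A`
form a pairwise intersecting family `𝒢_A` (equal `X₁`-traces are in containment), and `𝒢_A`,
`𝒢_{X₁ \ A}` are cross-Sperner (their `X₁`-traces are disjoint). Hence `|𝒢_A| + |𝒢_{X₁ \ A}| ≤
2^{|X₂| - 1}`, and summing over the `2^{|X₁|}` sets `A` counts every member of `F` twice.

For the cross-Sperner bound on an `n`-set, let `Uᵢ`, `Dᵢ` be the up- and down-closures of the two
intersecting families `𝒢ᵢ`. Harris–Kleitman gives `2ⁿ |𝒢ᵢ| ≤ |Uᵢ| |Dᵢ|`; the `Uᵢ` are intersecting,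
so `|Uᵢ| ≤ 2ⁿ⁻¹`; and cross-Sperner means `U₁ ∩ D₂ = U₂ ∩ D₁ = ∅`.
-/

open Finset

namespace Finset

section Closure

variable {β : Type*} [Fintype β] [DecidableEq β] {𝒜 ℬ : Finset (Finset β)} {s : Finset β}

def upClosure (𝒜 : Finset (Finset β)) : Finset (Finset β) := {s | ∃ a ∈ 𝒜, a ⊆ s}

def downClosure (𝒜 : Finset (Finset β)) : Finset (Finset β) := {s | ∃ a ∈ 𝒜, s ⊆ a}

@[simp] lemma mem_upClosure : s ∈ upClosure 𝒜 ↔ ∃ a ∈ 𝒜, a ⊆ s := by simp [upClosure]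

@[simp] lemma mem_downClosure : s ∈ downClosure 𝒜 ↔ ∃ a ∈ 𝒜, s ⊆ a := by simp [downClosure]

lemma isUpperSet_upClosure : IsUpperSet (upClosure 𝒜 : Set (Finset β)) := by
  rintro s t hst hs
  obtain ⟨a, ha, has⟩ := mem_upClosure.1 hs
  exact mem_upClosure.2 ⟨a, ha, has.trans hst⟩

lemma isLowerSet_downClosure : IsLowerSet (downClosure 𝒜 : Set (Finset β)) := by
  rintro s t hts hs
  obtain ⟨a, ha, hsa⟩ := mem_downClosure.1 hs
  exact mem_downClosure.2 ⟨a, ha, hts.trans hsa⟩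

lemma subset_upClosure_inter_downClosure : 𝒜 ⊆ upClosure 𝒜 ∩ downClosure 𝒜 := fun a ha =>
  mem_inter.2 ⟨mem_upClosure.2 ⟨a, ha, subset_rfl⟩, mem_downClosure.2 ⟨a, ha, subset_rfl⟩⟩

lemma two_pow_mul_card_le_card_upClosure_mul_card_downClosure :
    2 ^ Fintype.card β * #𝒜 ≤ #(upClosure 𝒜) * #(downClosure 𝒜) :=
  (Nat.mul_le_mul_left _ (card_le_card subset_upClosure_inter_downClosure)).trans
    (isUpperSet_upClosure.card_inter_le_finset isLowerSet_downClosure)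

lemma _root_.Set.Intersecting.upClosure (h𝒜 : (𝒜 : Set (Finset β)).Intersecting) :
    (upClosure 𝒜 : Set (Finset β)).Intersecting := by
  rintro s hs t ht hst
  obtain ⟨a, ha, has⟩ := mem_upClosure.1 hs
  obtain ⟨b, hb, hbt⟩ := mem_upClosure.1 ht
  exact h𝒜 ha hb (hst.mono has hbt)

lemma disjoint_upClosure_downClosure (h : ∀ a ∈ 𝒜, ∀ b ∈ ℬ, ¬a ⊆ b) :
    Disjoint (upClosure 𝒜) (downClosure ℬ) := by
  refine disjoint_left.2 fun s hs hs' => ?_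
  obtain ⟨a, ha, has⟩ := mem_upClosure.1 hs
  obtain ⟨b, hb, hsb⟩ := mem_downClosure.1 hs'
  exact h a ha b hb (has.trans hsb)

end Closure

end Finset

/-- `N · 2(g + h) ≤ 2u₁(N - u₂) + 2u₂(N - u₁) ≤ N²`, the last step being
`(N - 2u₁)(N - 2u₂) ≥ 0`. -/
lemma Nat.two_mul_add_le_of_mul_le_mul_of_add_le {N g h u₁ u₂ d₁ d₂ : ℕ} (hN : 0 < N)
    (hu₁ : 2 * u₁ ≤ N) (hu₂ : 2 * u₂ ≤ N) (h₁ : u₁ + d₂ ≤ N) (h₂ : u₂ + d₁ ≤ N)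
    (hg : N * g ≤ u₁ * d₁) (hh : N * h ≤ u₂ * d₂) : 2 * (g + h) ≤ N := by
  refine le_of_mul_le_mul_left ?_ hN
  nlinarith [Nat.mul_le_mul hu₁ hu₂, Nat.mul_le_mul_left u₁ h₂, Nat.mul_le_mul_left u₂ h₁]

section CrossSperner

variable {β : Type*} [Fintype β] [DecidableEq β] {𝒜 ℬ : Finset (Finset β)}

theorem Set.Intersecting.two_mul_card_add_card_le_s13 (h𝒜 : (𝒜 : Set (Finset β)).Intersecting)
    (hℬ : (ℬ : Set (Finset β)).Intersecting) (h𝒜ℬ : ∀ a ∈ 𝒜, ∀ b ∈ ℬ, ¬a ⊆ b)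
    (hℬ𝒜 : ∀ b ∈ ℬ, ∀ a ∈ 𝒜, ¬b ⊆ a) : 2 * (#𝒜 + #ℬ) ≤ 2 ^ Fintype.card β := by
  have hcard : Fintype.card (Finset β) = 2 ^ Fintype.card β := Fintype.card_finset
  have hsum {𝒞 𝒟 : Finset (Finset β)} (h : Disjoint 𝒞 𝒟) : #𝒞 + #𝒟 ≤ 2 ^ Fintype.card β :=
    hcard ▸ card_union_of_disjoint h ▸ card_le_univ _
  exact Nat.two_mul_add_le_of_mul_le_mul_of_add_le (by positivity)
    (hcard ▸ h𝒜.upClosure.card_le) (hcard ▸ hℬ.upClosure.card_le)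
    (hsum (disjoint_upClosure_downClosure h𝒜ℬ)) (hsum (disjoint_upClosure_downClosure hℬ𝒜))
    two_pow_mul_card_le_card_upClosure_mul_card_downClosure
    two_pow_mul_card_le_card_upClosure_mul_card_downClosure

theorem two_mul_card_add_card_le_of_pairwise_not_disjoint [Nonempty β]
    (h𝒜 : (𝒜 : Set (Finset β)).Pairwise (¬Disjoint · ·))
    (hℬ : (ℬ : Set (Finset β)).Pairwise (¬Disjoint · ·)) (h𝒜ℬ : ∀ a ∈ 𝒜, ∀ b ∈ ℬ, ¬a ⊆ b)
    (hℬ𝒜 : ∀ b ∈ ℬ, ∀ a ∈ 𝒜, ¬b ⊆ a) : 2 * (#𝒜 + #ℬ) ≤ 2 ^ Fintype.card β := by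
  have hpow : 2 ≤ 2 ^ Fintype.card β := Nat.le_self_pow Fintype.card_ne_zero 2
  -- `{∅}` is the only pairwise non-disjoint family that is not intersecting.
  by_cases h𝒜₀ : 𝒜 = {∅}
  · obtain rfl : ℬ = ∅ := eq_empty_of_forall_notMem fun b hb =>
      h𝒜ℬ ∅ (h𝒜₀ ▸ mem_singleton_self _) b hb (empty_subset b)
    simpa [h𝒜₀] using hpow
  by_cases hℬ₀ : ℬ = {∅}
  · obtain rfl : 𝒜 = ∅ := eq_empty_of_forall_notMem fun a ha =>
      hℬ𝒜 ∅ (hℬ₀ ▸ mem_singleton_self _) a ha (empty_subset a)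
    simpa [hℬ₀] using hpow
  exact Set.Intersecting.two_mul_card_add_card_le_s13
    (Set.intersecting_iff_pairwise_not_disjoint.2 ⟨h𝒜, by exact_mod_cast h𝒜₀⟩)
    (Set.intersecting_iff_pairwise_not_disjoint.2 ⟨hℬ, by exact_mod_cast hℬ₀⟩) h𝒜ℬ hℬ𝒜

end CrossSperner

namespace Finset

variable {α : Type*} [DecidableEq α]

lemma map_subtype_mem (S Y : Finset α) :
    (S.subtype (· ∈ Y)).map (Function.Embedding.subtype _) = S ∩ Y := by
  rw [subtype_map, filter_mem_eq_inter]

lemma subtype_mem_subset_subtype_mem_iff {S T Y : Finset α} :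
    S.subtype (· ∈ Y) ⊆ T.subtype (· ∈ Y) ↔ S ∩ Y ⊆ T ∩ Y := by
  rw [← map_subset_map (f := Function.Embedding.subtype _), map_subtype_mem, map_subtype_mem]

lemma disjoint_subtype_mem_iff {S T Y : Finset α} :
    Disjoint (S.subtype (· ∈ Y)) (T.subtype (· ∈ Y)) ↔ Disjoint (S ∩ Y) (T ∩ Y) := by
  rw [← disjoint_map (Function.Embedding.subtype _), map_subtype_mem, map_subtype_mem]

lemma subtype_mem_inj {S T Y : Finset α} :
    S.subtype (· ∈ Y) = T.subtype (· ∈ Y) ↔ S ∩ Y = T ∩ Y := by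
  rw [← map_inj (f := Function.Embedding.subtype _), map_subtype_mem, map_subtype_mem]

lemma eq_of_inter_eq_of_inter_eq {S T X₁ X₂ : Finset α} (hS : S ⊆ X₁ ∪ X₂) (hT : T ⊆ X₁ ∪ X₂)
    (h₁ : S ∩ X₁ = T ∩ X₁) (h₂ : S ∩ X₂ = T ∩ X₂) : S = T := by
  rw [← inter_eq_left.2 hS, ← inter_eq_left.2 hT, inter_union_distrib_left,
    inter_union_distrib_left, h₁, h₂]

lemma ne_sdiff_self {A X : Finset α} (hX : X.Nonempty) : A ≠ X \ A := by
  intro h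
  have hA : Disjoint A (X \ A) := disjoint_sdiff
  rw [← h, disjoint_self] at hA
  subst hA
  rw [sdiff_bot] at h
  exact hX.ne_empty h.symm

lemma sum_card_filter_inter_eq (F : Finset (Finset α)) (X : Finset α) :
    ∑ A ∈ X.powerset, #{S ∈ F | S ∩ X = A} = #F :=
  (card_eq_sum_card_fiberwise fun _ _ => mem_powerset.2 inter_subset_right).symm

lemma sum_card_filter_inter_eq_sdiff (F : Finset (Finset α)) (X : Finset α) :
    ∑ A ∈ X.powerset, #{S ∈ F | S ∩ X = X \ A} = #F := by
  rw [← sum_card_filter_inter_eq F X]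
  refine sum_nbij' (X \ ·) (X \ ·) ?_ ?_ ?_ ?_ fun _ _ => rfl <;>
    simp +contextual

end Finset

section Fibres

variable {α : Type*} [DecidableEq α] {X₁ X₂ : Finset α} {F : Finset (Finset α)}

def traceFamily (F : Finset (Finset α)) (X₁ X₂ C : Finset α) : Finset (Finset X₂) :=
  {S ∈ F | S ∩ X₁ = C}.image (·.subtype (· ∈ X₂))

lemma card_traceFamily (hF : ∀ S ∈ F, S ⊆ X₁ ∪ X₂) (C : Finset α) :
    #(traceFamily F X₁ X₂ C) = #{S ∈ F | S ∩ X₁ = C} := by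
  refine card_image_of_injOn fun S hS T hT hST => ?_
  simp only [mem_coe, mem_filter] at hS hT
  exact eq_of_inter_eq_of_inter_eq (hF S hS.1) (hF T hT.1) (hS.2.trans hT.2.symm)
    (subtype_mem_inj.1 hST)

lemma pairwise_not_disjoint_traceFamily
    (hint : ∀ S ∈ F, ∀ T ∈ F, S ≠ T → S ∩ X₁ = T ∩ X₁ → ¬Disjoint (S ∩ X₂) (T ∩ X₂))
    (C : Finset α) : (traceFamily F X₁ X₂ C : Set (Finset X₂)).Pairwise (¬Disjoint · ·) := by
  simp only [traceFamily, coe_image, coe_filter]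
  rintro _ ⟨S, hS, rfl⟩ _ ⟨T, hT, rfl⟩ hST
  rw [disjoint_subtype_mem_iff]
  exact hint S hS.1 T hT.1 (ne_of_apply_ne _ hST) (hS.2.trans hT.2.symm)

lemma not_subset_of_mem_traceFamily
    (hsperner : ∀ S ∈ F, ∀ T ∈ F, S ≠ T → Disjoint (S ∩ X₁) (T ∩ X₁) → ¬S ∩ X₂ ⊆ T ∩ X₂)
    {C D : Finset α} (hCD : Disjoint C D) (hne : C ≠ D) :
    ∀ a ∈ traceFamily F X₁ X₂ C, ∀ b ∈ traceFamily F X₁ X₂ D, ¬a ⊆ b := by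
  simp only [traceFamily, mem_image, mem_filter]
  rintro _ ⟨S, ⟨hS, hSC⟩, rfl⟩ _ ⟨T, ⟨hT, hTD⟩, rfl⟩
  rw [subtype_mem_subset_subtype_mem_iff]
  refine hsperner S hS T hT (fun hST => hne ?_) (hSC ▸ hTD ▸ hCD)
  rw [← hSC, ← hTD, hST]

theorem two_mul_card_filter_add_card_filter_le (hX₂ : X₂.Nonempty) (hF : ∀ S ∈ F, S ⊆ X₁ ∪ X₂)
    (hint : ∀ S ∈ F, ∀ T ∈ F, S ≠ T → S ∩ X₁ = T ∩ X₁ → ¬Disjoint (S ∩ X₂) (T ∩ X₂))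
    (hsperner : ∀ S ∈ F, ∀ T ∈ F, S ≠ T → Disjoint (S ∩ X₁) (T ∩ X₁) → ¬S ∩ X₂ ⊆ T ∩ X₂)
    {C D : Finset α} (hCD : Disjoint C D) (hne : C ≠ D) :
    2 * (#{S ∈ F | S ∩ X₁ = C} + #{S ∈ F | S ∩ X₁ = D}) ≤ 2 ^ #X₂ := by
  have := hX₂.to_subtype
  rw [← card_traceFamily hF, ← card_traceFamily hF, ← Fintype.card_coe X₂]
  exact two_mul_card_add_card_le_of_pairwise_not_disjoint
    (pairwise_not_disjoint_traceFamily hint C) (pairwise_not_disjoint_traceFamily hint D)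
    (not_subset_of_mem_traceFamily hsperner hCD hne)
    (not_subset_of_mem_traceFamily hsperner hCD.symm hne.symm)

end Fibres

theorem stmt_13 {α : Type*} [DecidableEq α] (X₁ X₂ : Finset α)
    (hdisj : Disjoint X₁ X₂) (h1 : X₁.Nonempty) (h2 : X₂.Nonempty)
    (F : Finset (Finset α)) (hF : F ⊆ (X₁ ∪ X₂).powerset)
    (h1I1S : ∀ F₁ ∈ F, ∀ F₂ ∈ F, F₁ ≠ F₂ →
      ¬ ((F₁ ∩ X₁) ∩ (F₂ ∩ X₁) = ∅ ∧ (F₁ ∩ X₂ ⊆ F₂ ∩ X₂ ∨ F₂ ∩ X₂ ⊆ F₁ ∩ X₂)) ∧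
      ¬ ((F₁ ∩ X₂) ∩ (F₂ ∩ X₂) = ∅ ∧ (F₁ ∩ X₁ ⊆ F₂ ∩ X₁ ∨ F₂ ∩ X₁ ⊆ F₁ ∩ X₁))) :
    4 * F.card ≤ 2 ^ (X₁ ∪ X₂).card := by
  have hint : ∀ S ∈ F, ∀ T ∈ F, S ≠ T → S ∩ X₁ = T ∩ X₁ → ¬Disjoint (S ∩ X₂) (T ∩ X₂) :=
    fun S hS T hT hST h hd =>
      (h1I1S S hS T hT hST).2 ⟨disjoint_iff_inter_eq_empty.1 hd, .inl h.subset⟩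
  have hsperner : ∀ S ∈ F, ∀ T ∈ F, S ≠ T → Disjoint (S ∩ X₁) (T ∩ X₁) → ¬S ∩ X₂ ⊆ T ∩ X₂ :=
    fun S hS T hT hST hd hsub =>
      (h1I1S S hS T hT hST).1 ⟨disjoint_iff_inter_eq_empty.1 hd, .inl hsub⟩
  have hfibre : ∀ A ∈ X₁.powerset,
      2 * (#{S ∈ F | S ∩ X₁ = A} + #{S ∈ F | S ∩ X₁ = X₁ \ A}) ≤ 2 ^ #X₂ :=
    fun _ _ => two_mul_card_filter_add_card_filter_le h2
      (fun S hS => mem_powerset.1 (hF hS)) hint hsperner disjoint_sdiff (ne_sdiff_self h1)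
  calc 4 * #F
      = ∑ A ∈ X₁.powerset, 2 * (#{S ∈ F | S ∩ X₁ = A} + #{S ∈ F | S ∩ X₁ = X₁ \ A}) := by
        rw [← mul_sum, sum_add_distrib, sum_card_filter_inter_eq, sum_card_filter_inter_eq_sdiff]
        ring
    _ ≤ ∑ _A ∈ X₁.powerset, 2 ^ #X₂ := sum_le_sum hfibre
    _ = 2 ^ #(X₁ ∪ X₂) := by
        rw [sum_const, card_powerset, smul_eq_mul, ← pow_add, card_union_of_disjoint hdisj]
end

section
/- Let X be a finite set partitioned into nonempty parts X₁ and X₂, and let A ⊆ 2^{X₁}, B ⊆ 2^{X₂} be maximal intersecting families (so |A| = 2^{|X₁|−1}, |B| = 2^{|X₂|−1}). Then F = {A ∪ B : A ∈ A, B ∈ B} is a 1-part intersecting, 1-part Sperner family of size 2^{|X|−2}. -/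
theorem stmt_14 {α : Type*} [DecidableEq α] (X₁ X₂ : Finset α)
    (hdisj : Disjoint X₁ X₂) (h1 : X₁.Nonempty) (h2 : X₂.Nonempty)
    (A B : Finset (Finset α)) (hA : A ⊆ X₁.powerset) (hB : B ⊆ X₂.powerset)
    (hAint : ∀ S₁ ∈ A, ∀ S₂ ∈ A, (S₁ ∩ S₂).Nonempty)
    (hBint : ∀ S₁ ∈ B, ∀ S₂ ∈ B, (S₁ ∩ S₂).Nonempty)
    (hAcard : A.card = 2 ^ (X₁.card - 1)) (hBcard : B.card = 2 ^ (X₂.card - 1))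
    (F : Finset (Finset α)) (hF : F = Finset.image₂ (· ∪ ·) A B) :
    (∀ F₁ ∈ F, ∀ F₂ ∈ F, F₁ ≠ F₂ →
      ¬ ((F₁ ∩ X₁) ∩ (F₂ ∩ X₁) = ∅ ∧ (F₁ ∩ X₂ ⊆ F₂ ∩ X₂ ∨ F₂ ∩ X₂ ⊆ F₁ ∩ X₂)) ∧
      ¬ ((F₁ ∩ X₂) ∩ (F₂ ∩ X₂) = ∅ ∧ (F₁ ∩ X₁ ⊆ F₂ ∩ X₁ ∨ F₂ ∩ X₁ ⊆ F₁ ∩ X₁))) ∧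
    F.card = 2 ^ ((X₁ ∪ X₂).card - 2) := by
  -- traces
  have trace1 : ∀ S ∈ A, ∀ T ∈ B, (S ∪ T) ∩ X₁ = S := by
    intro S hS T hT
    have hS1 : S ⊆ X₁ := Finset.mem_powerset.mp (hA hS)
    have hT2 : T ⊆ X₂ := Finset.mem_powerset.mp (hB hT)
    ext x
    simp only [Finset.mem_inter, Finset.mem_union]
    constructor
    · rintro ⟨hx | hx, hx1⟩
      · exact hx
      · exact absurd hx1 (Finset.disjoint_right.mp hdisj (hT2 hx))
    · exact fun hx => ⟨Or.inl hx, hS1 hx⟩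
  have trace2 : ∀ S ∈ A, ∀ T ∈ B, (S ∪ T) ∩ X₂ = T := by
    intro S hS T hT
    have hS1 : S ⊆ X₁ := Finset.mem_powerset.mp (hA hS)
    have hT2 : T ⊆ X₂ := Finset.mem_powerset.mp (hB hT)
    ext x
    simp only [Finset.mem_inter, Finset.mem_union]
    constructor
    · rintro ⟨hx | hx, hx2⟩
      · exact absurd hx2 (Finset.disjoint_left.mp hdisj (hS1 hx))
      · exact hx
    · exact fun hx => ⟨Or.inr hx, hT2 hx⟩
  constructor
  · intro F₁ hF₁ F₂ hF₂ _
    rw [hF, Finset.mem_image₂] at hF₁ hF₂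
    obtain ⟨S₁, hS₁, T₁, hT₁, rfl⟩ := hF₁
    obtain ⟨S₂, hS₂, T₂, hT₂, rfl⟩ := hF₂
    rw [trace1 S₁ hS₁ T₁ hT₁, trace1 S₂ hS₂ T₂ hT₂,
        trace2 S₁ hS₁ T₁ hT₁, trace2 S₂ hS₂ T₂ hT₂]
    constructor
    · rintro ⟨hemp, -⟩
      exact Finset.Nonempty.ne_empty (hAint S₁ hS₁ S₂ hS₂) hemp
    · rintro ⟨hemp, -⟩
      exact Finset.Nonempty.ne_empty (hBint T₁ hT₁ T₂ hT₂) hemp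
  · have hcard : F.card = A.card * B.card := by
      rw [hF, Finset.image₂, Finset.card_image_of_injOn, Finset.card_product]
      rintro ⟨S₁, T₁⟩ h₁ ⟨S₂, T₂⟩ h₂ heq
      simp only [Finset.mem_coe, Finset.mem_product] at h₁ h₂
      simp only [Function.uncurry] at heq
      simp only [Prod.mk.injEq]
      have e1 : S₁ = S₂ := by
        rw [← trace1 S₁ h₁.1 T₁ h₁.2, ← trace1 S₂ h₂.1 T₂ h₂.2, heq]
      have e2 : T₁ = T₂ := by
        rw [← trace2 S₁ h₁.1 T₁ h₁.2, ← trace2 S₂ h₂.1 T₂ h₂.2, heq]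
      exact ⟨e1, e2⟩
    rw [hcard, hAcard, hBcard, ← pow_add,
        Finset.card_union_of_disjoint hdisj]
    have c1 := Finset.card_pos.mpr h1
    have c2 := Finset.card_pos.mpr h2
    congr 1
    omega
end

section
/- If F ⊆ 2^{[n]} is an intersecting antichain (intersecting Sperner family), then ∑_{F ∈ F, |F| ≤ n/2} 1/C(n, |F|−1) + ∑_{F ∈ F, |F| > n/2} 1/C(n, |F|) ≤ 1. -/
/-!
Katona's cyclic-order method. Put the ground set on the cycle `ZMod n` by a bijection `σ`; the
members of `F` that become arcs form an intersecting antichain `G` of arcs, and for such a family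
`∑ T ∈ G, w |T| ≤ 1`, where `w k = (n - k + 1) / (n k)` if `2 k ≤ n` and `w k = 1 / n` otherwise.
If `G` has an arc of size at most `n / 2`, let `A` be a shortest one, of size `k`. Every other
member meets `A` without containing it, so it has an endpoint at one of the `k - 1` cuts inside
`A`. By the antichain property at most one member starts and at most one ends at a given cut, and
two small ones doing so would be disjoint; so each cut carries weight at most `1 / n + w k`, and
`w k + (k - 1) (1 / n + w k) = 1`. If all members are large, they start at distinct points.
Averaging over `σ` gives the theorem: a `k`-set is an arc for `n k! (n - k)!` of the `n!`
bijections, and `n k! (n - k)! w k / n!` is the term of a `k`-set in the inequality.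
-/

open Finset
open scoped Nat

lemma exists_xor_succ_of_lt {p : ℕ → Prop} {k j₀ j₁ : ℕ} (h₀ : j₀ < k) (h₁ : j₁ < k) (hp₀ : p j₀)
    (hp₁ : ¬p j₁) : ∃ i, i + 1 < k ∧ Xor (p i) (p (i + 1)) := by
  by_contra! h
  have hconst : ∀ j < k, p j ↔ p 0 := by
    intro j hj
    induction j with
    | zero => rfl
    | succ j ih => exact ((not_xor _ _).mp (h j hj)).symm.trans (ih (by omega))
  exact hp₁ ((hconst j₁ h₁).mpr ((hconst j₀ h₀).mp hp₀))

lemma sum_le_sum_sum_filter_of_forall_exists {ι κ R : Type*} [AddCommMonoid R] [PartialOrder R]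
    [IsOrderedAddMonoid R] {s : Finset ι} {t : Finset κ} {p : ι → κ → Prop}
    [∀ i j, Decidable (p i j)] {f : ι → R} (hf : ∀ i ∈ s, 0 ≤ f i)
    (h : ∀ i ∈ s, ∃ j ∈ t, p i j) : ∑ i ∈ s, f i ≤ ∑ j ∈ t, ∑ i ∈ s with p i j, f i := by
  rw [sum_comm' (t' := s) (s' := fun i => t.filter (p i)) (by intros; simp; tauto)]
  refine sum_le_sum fun i hi => ?_
  obtain ⟨j, hj, hij⟩ := h i hi
  exact single_le_sum (f := fun _ => f i) (fun _ _ => hf i hi) (mem_filter.mpr ⟨hj, hij⟩)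

lemma Set.Intersecting.card_pos {α : Type*} [DecidableEq α] {𝒜 : Set (Finset α)}
    (h𝒜 : 𝒜.Intersecting) {s : Finset α} (hs : s ∈ 𝒜) : 0 < #s :=
  Finset.card_pos.mpr (Finset.nonempty_iff_ne_empty.mpr (h𝒜.ne_bot hs))

lemma IsAntichain.eq_of_rel_or_rel {α : Type*} {r : α → α → Prop} {s : Set α}
    (hs : IsAntichain r s) {a b : α} (ha : a ∈ s) (hb : b ∈ s) (h : r a b ∨ r b a) : a = b :=
  h.elim (hs.eq ha hb) (hs.eq' ha hb)

lemma ZMod.val_add_natCast_of_lt {n : ℕ} {z : ZMod n} {t : ℕ} (h : z.val + t < n) :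
    (z + t).val = z.val + t := by
  have ht : (t : ZMod n).val = t := ZMod.val_cast_of_lt (by omega)
  rw [ZMod.val_add_of_lt (by rwa [ht]), ht]

section Arc

variable {n : ℕ} [NeZero n]

def arc (a : ZMod n) (k : ℕ) : Finset (ZMod n) := {y | (y - a).val < k}

@[simp]
lemma mem_arc {a y : ZMod n} {k : ℕ} : y ∈ arc a k ↔ (y - a).val < k := by
  simp [arc]

lemma card_arc (a : ZMod n) {k : ℕ} (hk : k ≤ n) : #(arc a k) = k := by
  rw [← card_range k]
  refine card_nbij' (fun y => (y - a).val) (fun t => a + t) (fun y hy => ?_) (fun t ht => ?_)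
    (fun y _ => ?_) (fun t ht => ?_)
  · simpa using hy
  · simp only [coe_range, Set.mem_Iio] at ht
    simp [ZMod.val_cast_of_lt (ht.trans_le hk), ht]
  · simp
  · simp only [coe_range, Set.mem_Iio] at ht
    simp [ZMod.val_cast_of_lt (ht.trans_le hk)]

lemma arc_mono (a : ZMod n) {k k' : ℕ} (h : k ≤ k') : arc a k ⊆ arc a k' := fun y hy => by
  simp only [mem_arc] at hy ⊢
  omega

lemma arc_subset_arc_of_add_eq {a a' : ZMod n} {k k' : ℕ} (hk : k ≤ k') (hk' : k' ≤ n)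
    (h : a + k = a' + k') : arc a k ⊆ arc a' k' := fun y hy => by
  simp only [mem_arc] at hy ⊢
  have : y - a' = y - a + (k' - k : ℕ) := by
    rw [Nat.cast_sub hk]; linear_combination h
  rw [this, ZMod.val_add_natCast_of_lt (by omega)]
  omega

lemma disjoint_arc_arc {b c : ZMod n} {m k : ℕ} (h : b + m = c) (hmk : m + k ≤ n) :
    Disjoint (arc b m) (arc c k) := by
  refine disjoint_left.mpr fun y hb hc => ?_
  simp only [mem_arc] at hb hc
  have : y - b = y - c + m := by linear_combination -h
  rw [this, ZMod.val_add_natCast_of_lt (by omega)] at hb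
  omega

lemma mem_arc_self (a : ZMod n) {k : ℕ} (hk : 0 < k) : a ∈ arc a k := by
  simpa using hk

lemma sub_one_notMem_arc (a : ZMod n) {k : ℕ} (hk : k < n) : a - 1 ∉ arc a k := by
  have : a - 1 - a = ((n - 1 : ℕ) : ZMod n) := by
    rw [Nat.cast_sub NeZero.one_le, ZMod.natCast_self]; ring
  rw [mem_arc, this, ZMod.val_cast_of_lt (by omega)]
  omega

lemma add_one_eq_of_notMem_arc {a c : ZMod n} {k : ℕ} (hc : c ∉ arc a k)
    (hc' : c + 1 ∈ arc a k) : c + 1 = a := by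
  rw [mem_arc] at hc hc'
  obtain ht | ht := Nat.eq_zero_or_pos (c + 1 - a).val
  · exact sub_eq_zero.mp ((ZMod.val_eq_zero _).mp ht)
  · have : c - a = ((c + 1 - a).val - 1 : ℕ) := by
      rw [Nat.cast_sub ht, ZMod.natCast_zmod_val]; ring
    rw [this, ZMod.val_cast_of_lt (by have := ZMod.val_lt (c + 1 - a); omega)] at hc
    omega

lemma add_one_eq_add_of_mem_arc {a c : ZMod n} {k : ℕ} (hk : k ≤ n) (hc : c ∈ arc a k)
    (hc' : c + 1 ∉ arc a k) : c + 1 = a + k := by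
  rw [mem_arc] at hc hc'
  have : c + 1 - a = ((c - a).val + 1 : ℕ) := by
    push_cast [ZMod.natCast_zmod_val]; ring
  have hk : (c - a).val + 1 = k := by
    by_contra hne
    rw [this, ZMod.val_cast_of_lt (by omega)] at hc'
    omega
  rw [sub_eq_iff_eq_add'] at this
  rw [this, ← hk]

lemma arc_injective {k : ℕ} (hk : 0 < k) (hkn : k < n) :
    Function.Injective (arc · k : ZMod n → Finset (ZMod n)) :=
  fun a b (hab : arc a k = arc b k) => by
  have h1 : a - 1 ∉ arc b k := hab ▸ sub_one_notMem_arc a hkn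
  have h2 : a - 1 + 1 ∈ arc b k := by simpa [← hab] using mem_arc_self a hk
  simpa using add_one_eq_of_notMem_arc h1 h2

lemma exists_xor_mem_of_not_subset {x : ZMod n} {k : ℕ} {T : Finset (ZMod n)}
    (hmeet : ¬Disjoint (arc x k) T) (hsub : ¬arc x k ⊆ T) :
    ∃ i ∈ range (k - 1), Xor (x + i ∈ T) (x + i + 1 ∈ T) := by
  obtain ⟨y, hyA, hyT⟩ := not_disjoint_iff.mp hmeet
  obtain ⟨z, hzA, hzT⟩ := not_subset.mp hsub
  rw [mem_arc] at hyA hzA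
  obtain ⟨i, hik, hi⟩ := exists_xor_succ_of_lt (p := fun j : ℕ => x + j ∈ T) hyA hzA
    (by simpa using hyT) (by simpa using hzT)
  exact ⟨i, mem_range.mpr (by omega), by simpa [add_assoc] using hi⟩

def IsArc (T : Finset (ZMod n)) : Prop := ∃ a, T = arc a #T

instance : DecidablePred (IsArc : Finset (ZMod n) → Prop) :=
  fun T => inferInstanceAs (Decidable (∃ a, T = arc a #T))

lemma IsArc.subset_or_subset_of_add_one_mem {S T : Finset (ZMod n)} (hS : IsArc S) (hT : IsArc T)
    {c : ZMod n} (hcS : c ∉ S) (hcS' : c + 1 ∈ S) (hcT : c ∉ T) (hcT' : c + 1 ∈ T) :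
    S ⊆ T ∨ T ⊆ S := by
  obtain ⟨a, ha⟩ := hS
  obtain ⟨b, hb⟩ := hT
  rw [ha] at hcS hcS'
  rw [hb] at hcT hcT'
  have hab : a = b := (add_one_eq_of_notMem_arc hcS hcS').symm.trans
    (add_one_eq_of_notMem_arc hcT hcT')
  rw [ha, hb, hab]
  exact (le_total #S #T).imp (arc_mono b) (arc_mono b)

lemma IsArc.subset_or_subset_of_add_one_notMem {S T : Finset (ZMod n)} (hS : IsArc S)
    (hT : IsArc T) {c : ZMod n} (hcS : c ∈ S) (hcS' : c + 1 ∉ S) (hcT : c ∈ T)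
    (hcT' : c + 1 ∉ T) : S ⊆ T ∨ T ⊆ S := by
  obtain ⟨a, ha⟩ := hS
  obtain ⟨b, hb⟩ := hT
  have hSn : #S ≤ n := (card_le_univ S).trans_eq (ZMod.card n)
  have hTn : #T ≤ n := (card_le_univ T).trans_eq (ZMod.card n)
  rw [ha] at hcS hcS'
  rw [hb] at hcT hcT'
  have hab : a + #S = b + #T := (add_one_eq_add_of_mem_arc hSn hcS hcS').symm.trans
    (add_one_eq_add_of_mem_arc hTn hcT hcT')
  rw [ha, hb]
  exact (le_total #S #T).imp (arc_subset_arc_of_add_eq · hTn hab)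
    (arc_subset_arc_of_add_eq · hSn hab.symm)

lemma IsArc.disjoint_of_add_one_mem {S T : Finset (ZMod n)} (hS : IsArc S) (hT : IsArc T)
    {c : ZMod n} (hcS : c ∉ S) (hcS' : c + 1 ∈ S) (hcT : c ∈ T) (hcT' : c + 1 ∉ T)
    (hST : #S + #T ≤ n) : Disjoint T S := by
  obtain ⟨a, ha⟩ := hS
  obtain ⟨b, hb⟩ := hT
  have hTn : #T ≤ n := (card_le_univ T).trans_eq (ZMod.card n)
  rw [ha] at hcS hcS' ⊢
  rw [hb] at hcT hcT' ⊢
  refine disjoint_arc_arc ?_ (by omega)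
  rw [← add_one_eq_add_of_mem_arc hTn hcT hcT', add_one_eq_of_notMem_arc hcS hcS']

end Arc

noncomputable def cycleWeight (n k : ℕ) : ℝ :=
  if 2 * k ≤ n then (n - k + 1) / (n * k) else 1 / n

lemma cycleWeight_nonneg (n k : ℕ) : 0 ≤ cycleWeight n k := by
  unfold cycleWeight
  split_ifs with h
  · have : (k : ℝ) ≤ n := by exact_mod_cast (by omega : k ≤ n)
    exact div_nonneg (by linarith) (by positivity)
  · positivity

lemma cycleWeight_of_lt {n k : ℕ} (h : n < 2 * k) : cycleWeight n k = 1 / n := by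
  simp [cycleWeight, not_le.mpr h]

lemma one_div_le_cycleWeight {n k : ℕ} (hk : 1 ≤ k) (h : 2 * k ≤ n) : 1 / n ≤ cycleWeight n k := by
  have hk' : (1 : ℝ) ≤ k := by exact_mod_cast hk
  have h' : 2 * (k : ℝ) ≤ n := by exact_mod_cast h
  rw [cycleWeight, if_pos h, div_le_div_iff₀ (by linarith) (by nlinarith)]
  nlinarith

lemma cycleWeight_le_of_le {n k m : ℕ} (hk : 1 ≤ k) (hkm : k ≤ m) (hm : 2 * m ≤ n) :
    cycleWeight n m ≤ cycleWeight n k := by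
  have hk' : (1 : ℝ) ≤ k := by exact_mod_cast hk
  have hkm' : (k : ℝ) ≤ m := by exact_mod_cast hkm
  have hm' : 2 * (m : ℝ) ≤ n := by exact_mod_cast hm
  rw [cycleWeight, cycleWeight, if_pos hm, if_pos (by omega),
    div_le_div_iff₀ (by nlinarith) (by nlinarith)]
  nlinarith [mul_le_mul_of_nonneg_left hkm' (by nlinarith : (0 : ℝ) ≤ n * (n + 1))]

lemma cycleWeight_add_mul {n k : ℕ} (hk : 1 ≤ k) (h : 2 * k ≤ n) :
    cycleWeight n k + (k - 1 : ℕ) * (1 / n + cycleWeight n k) = 1 := by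
  have hn : (0 : ℝ) < n := by exact_mod_cast (by omega : 0 < n)
  rw [cycleWeight, if_pos h, Nat.cast_sub hk]
  field_simp
  ring

section CycleFamily

variable {n : ℕ} [NeZero n] {G : Finset (Finset (ZMod n))}

lemma card_filter_add_one_mem_le_one (harc : ∀ T ∈ G, IsArc T)
    (hanti : IsAntichain (· ⊆ ·) (G : Set (Finset (ZMod n)))) (c : ZMod n) :
    #{T ∈ G | c ∉ T ∧ c + 1 ∈ T} ≤ 1 := by
  refine card_le_one.mpr fun S hS T hT => ?_
  simp only [mem_filter] at hS hT
  exact hanti.eq_of_rel_or_rel hS.1 hT.1 <|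
    (harc S hS.1).subset_or_subset_of_add_one_mem (harc T hT.1) hS.2.1 hS.2.2 hT.2.1 hT.2.2

lemma card_filter_add_one_notMem_le_one (harc : ∀ T ∈ G, IsArc T)
    (hanti : IsAntichain (· ⊆ ·) (G : Set (Finset (ZMod n)))) (c : ZMod n) :
    #{T ∈ G | c ∈ T ∧ c + 1 ∉ T} ≤ 1 := by
  refine card_le_one.mpr fun S hS T hT => ?_
  simp only [mem_filter] at hS hT
  exact hanti.eq_of_rel_or_rel hS.1 hT.1 <|
    (harc S hS.1).subset_or_subset_of_add_one_notMem (harc T hT.1) hS.2.1 hS.2.2 hT.2.1 hT.2.2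

-- `Xor (c ∈ T) (c + 1 ∈ T)` says that the cut between `c` and `c + 1` is an endpoint of `T`.
lemma card_filter_xor_le_two (harc : ∀ T ∈ G, IsArc T)
    (hanti : IsAntichain (· ⊆ ·) (G : Set (Finset (ZMod n)))) (c : ZMod n) :
    #{T ∈ G | Xor (c ∈ T) (c + 1 ∈ T)} ≤ 2 := by
  calc #{T ∈ G | Xor (c ∈ T) (c + 1 ∈ T)}
      ≤ #({T ∈ G | c ∈ T ∧ c + 1 ∉ T} ∪ {T ∈ G | c ∉ T ∧ c + 1 ∈ T}) := by
        refine card_le_card fun T hT => ?_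
        simp only [mem_filter, mem_union] at hT ⊢
        rcases hT with ⟨hT, h | h⟩ <;> simp_all
    _ ≤ 1 + 1 := (card_union_le _ _).trans (add_le_add
        (card_filter_add_one_notMem_le_one harc hanti c)
        (card_filter_add_one_mem_le_one harc hanti c))

lemma card_filter_xor_small_le_one (harc : ∀ T ∈ G, IsArc T)
    (hint : (G : Set (Finset (ZMod n))).Intersecting)
    (hanti : IsAntichain (· ⊆ ·) (G : Set (Finset (ZMod n)))) (c : ZMod n) :
    #{T ∈ G | Xor (c ∈ T) (c + 1 ∈ T) ∧ 2 * #T ≤ n} ≤ 1 := by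
  refine card_le_one.mpr fun S hS T hT => ?_
  simp only [mem_filter] at hS hT
  obtain ⟨⟨hSG, hSc, hSsmall⟩, hTG, hTc, hTsmall⟩ := And.intro hS hT
  rcases hSc with ⟨hS1, hS2⟩ | ⟨hS1, hS2⟩ <;> rcases hTc with ⟨hT1, hT2⟩ | ⟨hT1, hT2⟩
  · exact hanti.eq_of_rel_or_rel hSG hTG <|
      (harc S hSG).subset_or_subset_of_add_one_notMem (harc T hTG) hS1 hS2 hT1 hT2
  · exact absurd ((harc T hTG).disjoint_of_add_one_mem (harc S hSG) hT2 hT1 hS1 hS2 (by omega))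
      (hint hSG hTG)
  · exact absurd ((harc S hSG).disjoint_of_add_one_mem (harc T hTG) hS2 hS1 hT1 hT2 (by omega))
      (hint hTG hSG)
  · exact hanti.eq_of_rel_or_rel hSG hTG <|
      (harc S hSG).subset_or_subset_of_add_one_mem (harc T hTG) hS2 hS1 hT2 hT1

lemma sum_filter_xor_cycleWeight_le (harc : ∀ T ∈ G, IsArc T)
    (hint : (G : Set (Finset (ZMod n))).Intersecting)
    (hanti : IsAntichain (· ⊆ ·) (G : Set (Finset (ZMod n)))) {k : ℕ} (hk : 1 ≤ k)
    (hkn : 2 * k ≤ n) (hmin : ∀ T ∈ G, 2 * #T ≤ n → k ≤ #T) (c : ZMod n) :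
    ∑ T ∈ G with Xor (c ∈ T) (c + 1 ∈ T), cycleWeight n #T ≤ 1 / n + cycleWeight n k := by
  set C := G.filter fun T => Xor (c ∈ T) (c + 1 ∈ T)
  have hδ : 0 ≤ cycleWeight n k - 1 / n := sub_nonneg.mpr (one_div_le_cycleWeight hk hkn)
  have hC : (#C : ℝ) ≤ 2 := by exact_mod_cast card_filter_xor_le_two harc hanti c
  have hCsmall : (#{T ∈ C | 2 * #T ≤ n} : ℝ) ≤ 1 := by
    rw [filter_filter]; exact_mod_cast card_filter_xor_small_le_one harc hint hanti c
  calc ∑ T ∈ C, cycleWeight n #T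
      ≤ ∑ T ∈ C, (1 / n + if 2 * #T ≤ n then cycleWeight n k - 1 / n else 0) := by
        refine sum_le_sum fun T hT => ?_
        split_ifs with hT'
        · have := cycleWeight_le_of_le hk (hmin T (mem_filter.mp hT).1 hT') hT'
          linarith
        · rw [cycleWeight_of_lt (not_le.mp hT'), add_zero]
    _ = #C * (1 / n) + #{T ∈ C | 2 * #T ≤ n} * (cycleWeight n k - 1 / n) := by
        rw [sum_add_distrib, ← sum_filter, sum_const, sum_const, nsmul_eq_mul, nsmul_eq_mul]
    _ ≤ 2 * (1 / n) + 1 * (cycleWeight n k - 1 / n) := by gcongr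
    _ = 1 / n + cycleWeight n k := by ring

lemma sum_cycleWeight_le_one_of_min_card (harc : ∀ T ∈ G, IsArc T)
    (hint : (G : Set (Finset (ZMod n))).Intersecting)
    (hanti : IsAntichain (· ⊆ ·) (G : Set (Finset (ZMod n)))) {A : Finset (ZMod n)} (hA : A ∈ G)
    (hAn : 2 * #A ≤ n) (hmin : ∀ T ∈ G, 2 * #T ≤ n → #A ≤ #T) :
    ∑ T ∈ G, cycleWeight n #T ≤ 1 := by
  have hw : ∀ T ∈ G, 0 ≤ cycleWeight n #T := fun T _ => cycleWeight_nonneg n #T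
  have hk : 1 ≤ #A := hint.card_pos hA
  obtain ⟨x, hx⟩ := harc A hA
  have hcover : ∀ T ∈ G.erase A, ∃ i ∈ range (#A - 1), Xor (x + i ∈ T) (x + i + 1 ∈ T) := by
    intro T hT
    obtain ⟨hTA, hTG⟩ := mem_erase.mp hT
    refine exists_xor_mem_of_not_subset ?_ ?_ <;> rw [← hx]
    · exact hint hA hTG
    · exact fun h => hTA (hanti.eq hA hTG h).symm
  calc ∑ T ∈ G, cycleWeight n #T = cycleWeight n #A + ∑ T ∈ G.erase A, cycleWeight n #T :=
        (add_sum_erase G _ hA).symm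
    _ ≤ cycleWeight n #A + ∑ i ∈ range (#A - 1),
          ∑ T ∈ G.erase A with Xor (x + i ∈ T) (x + i + 1 ∈ T), cycleWeight n #T := by
        gcongr
        exact sum_le_sum_sum_filter_of_forall_exists (fun T hT => hw T (mem_of_mem_erase hT))
          hcover
    _ ≤ cycleWeight n #A + ∑ i ∈ range (#A - 1), (1 / n + cycleWeight n #A) := by
        gcongr with i
        exact (sum_le_sum_of_subset_of_nonneg (filter_subset_filter _ (erase_subset A G))
          fun T hT _ => hw T (mem_filter.mp hT).1).trans
          (sum_filter_xor_cycleWeight_le harc hint hanti hk hAn hmin _)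
    _ = 1 := by rw [sum_const, card_range, nsmul_eq_mul, cycleWeight_add_mul hk hAn]

lemma sum_cycleWeight_le_one_of_forall_lt (harc : ∀ T ∈ G, IsArc T) (hlt : ∀ T ∈ G, #T < n)
    (hint : (G : Set (Finset (ZMod n))).Intersecting)
    (hanti : IsAntichain (· ⊆ ·) (G : Set (Finset (ZMod n)))) (hlarge : ∀ T ∈ G, n < 2 * #T) :
    ∑ T ∈ G, cycleWeight n #T ≤ 1 := by
  have hstart : ∀ T ∈ G, ∃ c ∈ (univ : Finset (ZMod n)), c ∉ T ∧ c + 1 ∈ T := by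
    intro T hT
    obtain ⟨a, ha⟩ := harc T hT
    rw [ha]
    exact ⟨a - 1, mem_univ _, sub_one_notMem_arc a (hlt T hT), by
      simpa using mem_arc_self a (hint.card_pos hT)⟩
  calc ∑ T ∈ G, cycleWeight n #T
      ≤ ∑ c : ZMod n, ∑ T ∈ G with c ∉ T ∧ c + 1 ∈ T, cycleWeight n #T :=
        sum_le_sum_sum_filter_of_forall_exists (fun T _ => cycleWeight_nonneg n #T) hstart
    _ ≤ ∑ c : ZMod n, (1 / n : ℝ) := by
        refine sum_le_sum fun c _ => ?_
        rw [sum_congr rfl fun T hT => cycleWeight_of_lt (hlarge T (mem_filter.mp hT).1),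
          sum_const, nsmul_eq_mul]
        exact mul_le_of_le_one_left (by positivity)
          (by exact_mod_cast card_filter_add_one_mem_le_one harc hanti c)
    _ = 1 := by
        rw [sum_const, card_univ, ZMod.card, nsmul_eq_mul, mul_one_div_cancel]
        exact_mod_cast NeZero.ne n

theorem sum_cycleWeight_le_one (harc : ∀ T ∈ G, IsArc T) (hlt : ∀ T ∈ G, #T < n)
    (hint : (G : Set (Finset (ZMod n))).Intersecting)
    (hanti : IsAntichain (· ⊆ ·) (G : Set (Finset (ZMod n)))) :
    ∑ T ∈ G, cycleWeight n #T ≤ 1 := by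
  by_cases hsmall : ∃ T ∈ G, 2 * #T ≤ n
  · obtain ⟨A, hA, hmin⟩ := exists_min_image {T ∈ G | 2 * #T ≤ n} card
      (by simpa [filter_nonempty_iff] using hsmall)
    rw [mem_filter] at hA
    exact sum_cycleWeight_le_one_of_min_card harc hint hanti hA.1 hA.2
      fun T hT h => hmin T (mem_filter.mpr ⟨hT, h⟩)
  · push Not at hsmall
    exact sum_cycleWeight_le_one_of_forall_lt harc hlt hint hanti hsmall

end CycleFamily

section Counting

variable {α β : Type*} [Fintype α] [Fintype β] [DecidableEq α] [DecidableEq β]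

lemma factorial_mul_factorial_le_card_map_eq {A : Finset α} {B : Finset β} (hAB : #A = #B)
    (hαβ : Fintype.card α = Fintype.card β) :
    (#A)! * (Fintype.card α - #A)! ≤ #{σ : α ≃ β | A.map σ.toEmbedding = B} := by
  let glue (e : ({x // x ∈ A} ≃ {y // y ∈ B}) × ({x // x ∉ A} ≃ {y // y ∉ B})) : α ≃ β :=
    (Equiv.sumCompl (· ∈ A)).symm.trans ((e.1.sumCongr e.2).trans (Equiv.sumCompl (· ∈ B)))
  have glue_pos : ∀ e x (hx : x ∈ A), glue e x = e.1 ⟨x, hx⟩ := fun e x hx => by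
    simp [glue, hx]
  have glue_neg : ∀ e x (hx : x ∉ A), glue e x = e.2 ⟨x, hx⟩ := fun e x hx => by
    simp [glue, hx]
  have hcard_in : Fintype.card ({x // x ∈ A} ≃ {y // y ∈ B}) = (#A)! :=
    (Fintype.card_equiv (Fintype.equivOfCardEq (by simpa using hAB))).trans (by simp)
  have hcard_out : Fintype.card ({x // x ∉ A} ≃ {y // y ∉ B}) = (Fintype.card α - #A)! :=
    (Fintype.card_equiv (Fintype.equivOfCardEq (by
      simp [Fintype.card_subtype_compl, hAB, hαβ]))).trans (by simp [Fintype.card_subtype_compl])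
  rw [← hcard_in, ← hcard_out, ← Fintype.card_prod, ← card_univ]
  refine card_le_card_of_injOn glue (fun e _ => mem_filter.mpr ⟨mem_univ _, ?_⟩) ?_
  · refine eq_of_subset_of_card_le (fun y hy => ?_) (by rw [card_map, hAB])
    obtain ⟨x, hx, rfl⟩ := mem_map.mp hy
    simp [glue_pos e x hx]
  · intro e _ e' _ h
    have h' : ∀ x, glue e x = glue e' x := fun x => congrArg (· x) h
    ext ⟨x, hx⟩ : 3
    · simpa [glue_pos _ x hx] using h' x
    · simpa [glue_neg _ x hx] using h' x

lemma mul_factorial_mul_factorial_le_card_isArc {n : ℕ} [NeZero n] (hα : Fintype.card α = n)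
    {S : Finset α} (hS : 0 < #S) (hSn : #S < n) :
    n * ((#S)! * (n - #S)!) ≤ #{σ : α ≃ ZMod n | IsArc (S.map σ.toEmbedding)} := by
  calc n * ((#S)! * (n - #S)!) = ∑ a : ZMod n, (#S)! * (Fintype.card α - #S)! := by
        rw [sum_const, card_univ, ZMod.card, smul_eq_mul, hα]
    _ ≤ ∑ a : ZMod n, #{σ : α ≃ ZMod n | S.map σ.toEmbedding = arc a #S} := by
        gcongr with a
        exact factorial_mul_factorial_le_card_map_eq (card_arc a hSn.le).symm (by simp [hα])
    _ = #(univ.biUnion fun a => {σ : α ≃ ZMod n | S.map σ.toEmbedding = arc a #S}) :=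
        (card_biUnion fun a _ b _ hab => disjoint_filter.mpr fun _ _ ha hb =>
          hab (arc_injective hS hSn (ha.symm.trans hb))).symm
    _ ≤ #{σ : α ≃ ZMod n | IsArc (S.map σ.toEmbedding)} := by
        refine card_le_card fun σ hσ => ?_
        obtain ⟨a, -, ha⟩ := mem_biUnion.mp hσ
        refine mem_filter.mpr ⟨mem_univ σ, a, ?_⟩
        rw [card_map]
        exact (mem_filter.mp ha).2

end Counting

noncomputable def lymWeight (n k : ℕ) : ℝ :=
  if 2 * k ≤ n then 1 / n.choose (k - 1) else 1 / n.choose k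

lemma lymWeight_mul_factorial {n k : ℕ} (hk : 1 ≤ k) (hkn : k ≤ n) :
    lymWeight n k * n ! = cycleWeight n k * (n * (k ! * (n - k)!)) := by
  obtain ⟨j, rfl⟩ : ∃ j, k = j + 1 := ⟨k - 1, by omega⟩
  obtain ⟨m, rfl⟩ : ∃ m, n = j + 1 + m := ⟨n - (j + 1), by omega⟩
  unfold lymWeight cycleWeight
  split_ifs
  · rw [Nat.cast_choose ℝ (by omega : j + 1 - 1 ≤ j + 1 + m)]
    simp only [add_tsub_cancel_right, show j + 1 + m - j = m + 1 by omega,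
      show j + 1 + m - (j + 1) = m by omega, Nat.factorial_succ]
    push_cast
    field_simp
    ring
  · rw [Nat.cast_choose ℝ hkn]
    simp only [show j + 1 + m - (j + 1) = m by omega]
    field_simp

section DoubleCounting

variable {α : Type*} [DecidableEq α]

lemma sum_cycleWeight_filter_isArc_map_le_one {n : ℕ} [NeZero n] (σ : α ≃ ZMod n)
    {F : Finset (Finset α)} (hlt : ∀ S ∈ F, #S < n) (hint : (F : Set (Finset α)).Intersecting)
    (hanti : IsAntichain (· ⊆ ·) (F : Set (Finset α))) :
    ∑ S ∈ F with IsArc (S.map σ.toEmbedding), cycleWeight n #S ≤ 1 := by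
  set F' := F.filter fun S => IsArc (S.map σ.toEmbedding)
  have hF' : (F' : Set (Finset α)) ⊆ F := coe_subset.mpr (filter_subset _ _)
  have key := sum_cycleWeight_le_one (G := F'.map σ.finsetCongr.toEmbedding) ?_ ?_ ?_ ?_
  · simpa using key
  · intro T hT
    obtain ⟨S, hS, rfl⟩ := mem_map.mp hT
    simpa using (mem_filter.mp hS).2
  · intro T hT
    obtain ⟨S, hS, rfl⟩ := mem_map.mp hT
    simpa using hlt S (mem_filter.mp hS).1
  · rw [coe_map]
    rintro _ ⟨S, hS, rfl⟩ _ ⟨T, hT, rfl⟩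
    simpa using hint (hF' hS) (hF' hT)
  · rw [coe_map]
    exact (hanti.subset hF').image _ fun S T h => by simpa using h

theorem sum_lymWeight_le_one_of_card_lt [Fintype α] {n : ℕ} [NeZero n] (hα : Fintype.card α = n)
    {F : Finset (Finset α)} (hlt : ∀ S ∈ F, #S < n) (hint : (F : Set (Finset α)).Intersecting)
    (hanti : IsAntichain (· ⊆ ·) (F : Set (Finset α))) : ∑ S ∈ F, lymWeight n #S ≤ 1 := by
  have hpos : ∀ S ∈ F, 0 < #S := fun S hS => hint.card_pos hS
  refine le_of_mul_le_mul_right ?_ (by positivity : (0 : ℝ) < n !)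
  calc (∑ S ∈ F, lymWeight n #S) * n !
      = ∑ S ∈ F, cycleWeight n #S * (n * ((#S)! * (n - #S)!) : ℕ) := by
        rw [sum_mul]
        refine sum_congr rfl fun S hS => ?_
        rw [lymWeight_mul_factorial (hpos S hS) (hlt S hS).le]
        push_cast; rfl
    _ ≤ ∑ S ∈ F, cycleWeight n #S * #{σ : α ≃ ZMod n | IsArc (S.map σ.toEmbedding)} := by
        gcongr with S hS
        · exact cycleWeight_nonneg n #S
        · exact_mod_cast mul_factorial_mul_factorial_le_card_isArc hα (hpos S hS) (hlt S hS)
    _ = ∑ σ : α ≃ ZMod n, ∑ S ∈ F with IsArc (S.map σ.toEmbedding), cycleWeight n #S := by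
        simp only [card_filter, Nat.cast_sum, Nat.cast_ite, Nat.cast_one, Nat.cast_zero, mul_sum,
          mul_ite, mul_one, mul_zero, sum_filter]
        exact sum_comm
    _ ≤ ∑ σ : α ≃ ZMod n, 1 :=
        sum_le_sum fun σ _ => sum_cycleWeight_filter_isArc_map_le_one σ hlt hint hanti
    _ = 1 * n ! := by
        rw [sum_const, card_univ, Fintype.card_equiv (Fintype.equivOfCardEq (by simp [hα])), hα]
        simp

theorem sum_lymWeight_le_one [Fintype α] {F : Finset (Finset α)}
    (hint : (F : Set (Finset α)).Intersecting) (hanti : IsAntichain (· ⊆ ·) (F : Set (Finset α))) :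
    ∑ S ∈ F, lymWeight (Fintype.card α) #S ≤ 1 := by
  by_cases huniv : univ ∈ F
  · have hn : 0 < Fintype.card α := by simpa using hint.card_pos huniv
    rw [eq_singleton_iff_unique_mem.mpr ⟨huniv, fun S hS => hanti.eq hS huniv (subset_univ S)⟩,
      sum_singleton, card_univ, lymWeight, if_neg (by omega), Nat.choose_self]
    simp
  · have hlt : ∀ S ∈ F, #S < Fintype.card α := fun S hS =>
      (card_lt_iff_ne_univ S).mpr fun h => huniv (h ▸ hS)
    obtain rfl | ⟨S, hS⟩ := F.eq_empty_or_nonempty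
    · simp
    · have : NeZero (Fintype.card α) := ⟨(Nat.zero_le _).trans_lt (hlt S hS) |>.ne'⟩
      exact sum_lymWeight_le_one_of_card_lt rfl hlt hint hanti

end DoubleCounting

theorem stmt_15 (n : ℕ) (F : Finset (Finset (Fin n)))
    (hint : ∀ A ∈ F, ∀ B ∈ F, (A ∩ B).Nonempty)
    (hsperner : ∀ A ∈ F, ∀ B ∈ F, A ⊆ B → A = B) :
    (∑ S ∈ F.filter (fun S => 2 * S.card ≤ n), (1 : ℝ) / (n.choose (S.card - 1)))
    + (∑ S ∈ F.filter (fun S => 2 * S.card > n), (1 : ℝ) / (n.choose S.card)) ≤ 1 := by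
  have hF := sum_lymWeight_le_one (F := F)
    (fun A hA B hB => not_disjoint_iff_nonempty_inter.mpr (hint A hA B hB))
    (fun A hA B hB hne hAB => hne (hsperner A hA B hB hAB))
  simpa only [lymWeight, Fintype.card_fin, sum_ite, not_le, gt_iff_lt] using hF
end

section
/- Let F, G ⊆ 2^{[n]} be an intersecting cross-Sperner pair of families, and define D' = {D ⊆ [n] : D ⊆ H for some H ∈ F ∪ G} \ (F ∪ G). Then |F| ≤ |D'| and |G| ≤ |D'|. -/
open Finset

lemma aux_key (n : ℕ) (F G : Finset (Finset (Fin n)))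
    (hFint : ∀ A ∈ F, ∀ B ∈ F, (A ∩ B).Nonempty)
    (hcross : ∀ A ∈ F, ∀ B ∈ G, ¬ A ⊆ B ∧ ¬ B ⊆ A)
    (D' : Finset (Finset (Fin n)))
    (hD' : D' = (Finset.univ.filter (fun D => ∃ H ∈ F ∪ G, D ⊆ H)) \ (F ∪ G)) :
    F.card ≤ D'.card := by
  refine (Finset.card_le_card_diffs F).trans (Finset.card_le_card ?_)
  rw [hD']
  intro C hC
  obtain ⟨A, hA, B, hB, rfl⟩ := Finset.mem_diffs.1 hC
  rw [Finset.mem_sdiff, Finset.mem_filter, Finset.mem_union]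
  have hAB : (A ∩ B).Nonempty := hFint A hA B hB
  refine ⟨⟨Finset.mem_univ _, A, Finset.mem_union_left _ hA, Finset.sdiff_subset⟩, ?_⟩
  rintro (h | h)
  · obtain ⟨x, hx⟩ := hFint _ h B hB
    simp only [Finset.mem_inter, Finset.mem_sdiff] at hx
    exact hx.1.2 hx.2
  · exact (hcross A hA _ h).2 Finset.sdiff_subset

theorem stmt_17 (n : ℕ) (F G : Finset (Finset (Fin n)))
    (hFint : ∀ A ∈ F, ∀ B ∈ F, (A ∩ B).Nonempty)
    (hGint : ∀ A ∈ G, ∀ B ∈ G, (A ∩ B).Nonempty)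
    (hcross : ∀ A ∈ F, ∀ B ∈ G, ¬ A ⊆ B ∧ ¬ B ⊆ A)
    (D' : Finset (Finset (Fin n)))
    (hD' : D' = (Finset.univ.filter (fun D => ∃ H ∈ F ∪ G, D ⊆ H)) \ (F ∪ G)) :
    F.card ≤ D'.card ∧ G.card ≤ D'.card := by
  constructor
  · exact aux_key n F G hFint hcross D' hD'
  · have hcross' : ∀ A ∈ G, ∀ B ∈ F, ¬ A ⊆ B ∧ ¬ B ⊆ A := fun A hA B hB =>
      ⟨(hcross B hB A hA).2, (hcross B hB A hA).1⟩
    have : D' = (Finset.univ.filter (fun D => ∃ H ∈ G ∪ F, D ⊆ H)) \ (G ∪ F) := by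
      rw [hD', Finset.union_comm]
    exact aux_key n G F hGint hcross' D' this
end
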